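/- For all real s, t and every integer n ≥ 1, ∫₀¹ |exp( ((t²−s²)/(4n))·Σ_{j=1}^n cos(4π·8^j·θ) ) − 1| dθ ≤ (exp(n^{−1/4}·(s²+t²)) − 1) + exp(s²+t²)/n. -/

import Mathlib

open MeasureTheory
open scoped Real

/-!
Put `u = s² + t²`, `c = (t² - s²)/(4n)` and `S θ = ∑ⱼ cos (2π · 2·8ʲ · θ)`, so that `|c S| ≤ u/4`
because `|S| ≤ n`. Hence `|exp (c S) - 1| ≤ |c| e^{u/4} |S|`. The frequencies `2·8ʲ` are
distinct, so orthogonality gives `∫₀¹ S² = n/2` and therefore `∫₀¹ |S| ≤ √n`. The integral is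
thus at most `u e^{u/4} / (4√n)`; writing `a = n^{1/4}`, this is at most `u/a ≤ e^{u/a} - 1` when
`e^{u/4} ≤ 4a`, and at most `e^u/a⁴` otherwise.
-/

open Real Finset

theorem abs_exp_sub_one_le_abs_mul_exp_abs (x : ℝ) : |exp x - 1| ≤ |x| * exp |x| := by
  have key : ∀ y : ℝ, 1 - exp (-y) ≤ y := fun y => by linarith [add_one_le_exp (-y)]
  rcases le_or_gt 0 x with hx | hx
  · rw [abs_of_nonneg hx, abs_of_nonneg (by linarith [one_le_exp hx])]
    have : exp x - 1 = exp x * (1 - exp (-x)) := by rw [mul_sub, ← exp_add]; simp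
    rw [this, mul_comm x]
    exact mul_le_mul_of_nonneg_left (key x) (exp_pos x).le
  · rw [abs_of_neg hx, abs_of_nonpos (by linarith [exp_lt_one_iff.mpr hx])]
    calc -(exp x - 1) ≤ -x := by simpa using key (-x)
      _ ≤ -x * exp (-x) := le_mul_of_one_le_right (by linarith) (one_le_exp (by linarith))

theorem intervalIntegral_abs_exp_mul_sub_one_le {f : ℝ → ℝ} (hf : Continuous f) {a b : ℝ}
    (hab : a ≤ b) (c : ℝ) {M : ℝ} (hM : ∀ θ, |c * f θ| ≤ M) :
    ∫ θ in a..b, |exp (c * f θ) - 1| ≤ |c| * exp M * ∫ θ in a..b, |f θ| := by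
  rw [← intervalIntegral.integral_const_mul]
  refine intervalIntegral.integral_mono hab ((by fun_prop : Continuous _).intervalIntegrable _ _)
    ((by fun_prop : Continuous _).intervalIntegrable _ _) fun θ => ?_
  calc |exp (c * f θ) - 1| ≤ |c * f θ| * exp |c * f θ| := abs_exp_sub_one_le_abs_mul_exp_abs _
    _ ≤ |c * f θ| * exp M := by gcongr; exact hM θ
    _ = |c| * exp M * |f θ| := by rw [abs_mul]; ring

theorem abs_le_add_sq_div (x : ℝ) {c : ℝ} (hc : 0 < c) : |x| ≤ (c + x ^ 2 / c) / 2 := by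
  have h : (c + x ^ 2 / c) / 2 - |x| = (|x| - c) ^ 2 / (2 * c) := by
    rw [← sq_abs x]; field_simp; ring
  linarith [show 0 ≤ (|x| - c) ^ 2 / (2 * c) by positivity]

theorem intervalIntegral_abs_le_add_integral_sq_div {f : ℝ → ℝ} (hf : Continuous f) {a b : ℝ}
    (hab : a ≤ b) {c : ℝ} (hc : 0 < c) :
    ∫ θ in a..b, |f θ| ≤ (c * (b - a) + (∫ θ in a..b, f θ ^ 2) / c) / 2 := by
  calc ∫ θ in a..b, |f θ| ≤ ∫ θ in a..b, (c + f θ ^ 2 / c) / 2 :=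
        intervalIntegral.integral_mono hab ((by fun_prop : Continuous _).intervalIntegrable _ _)
          ((by fun_prop : Continuous _).intervalIntegrable _ _) fun θ => abs_le_add_sq_div _ hc
    _ = _ := by
      rw [intervalIntegral.integral_div, intervalIntegral.integral_add intervalIntegrable_const
        ((by fun_prop : Continuous _).intervalIntegrable _ _), intervalIntegral.integral_div]
      simp [mul_comm]

theorem integral_cos_two_pi_int_mul (N : ℤ) :
    ∫ θ in (0 : ℝ)..1, cos (2 * π * N * θ) = if N = 0 then 1 else 0 := by
  split_ifs with hN
  · simp [hN]
  · rw [intervalIntegral.integral_comp_mul_left (fun x => cos x) (by positivity), integral_cos]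
    simp [mul_comm (2 * π), (sin_periodic.int_mul_eq N).trans sin_zero]

theorem integral_cos_mul_cos_two_pi (m k : ℕ) (hm : m ≠ 0) :
    ∫ θ in (0 : ℝ)..1, cos (2 * π * m * θ) * cos (2 * π * k * θ) =
      if m = k then 1 / 2 else 0 := by
  have h (θ : ℝ) : cos (2 * π * m * θ) * cos (2 * π * k * θ)
      = (cos (2 * π * ((m - k : ℤ) : ℝ) * θ) + cos (2 * π * ((m + k : ℤ) : ℝ) * θ)) / 2 := by
    push_cast
    rw [show 2 * π * (m - k) * θ = 2 * π * m * θ - 2 * π * k * θ by ring,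
      show 2 * π * (m + k) * θ = 2 * π * m * θ + 2 * π * k * θ by ring, cos_sub, cos_add]
    ring
  simp_rw [h]
  rw [intervalIntegral.integral_div, intervalIntegral.integral_add
    ((by fun_prop : Continuous _).intervalIntegrable _ _)
    ((by fun_prop : Continuous _).intervalIntegrable _ _),
    integral_cos_two_pi_int_mul, integral_cos_two_pi_int_mul,
    if_neg (show (m + k : ℤ) ≠ 0 by omega)]
  simp only [sub_eq_zero, Nat.cast_inj]
  split_ifs <;> norm_num

section CosSum

variable {ι : Type*}

noncomputable def cosSum (s : Finset ι) (k : ι → ℕ) (θ : ℝ) : ℝ :=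
  ∑ j ∈ s, cos (2 * π * k j * θ)

theorem continuous_cosSum (s : Finset ι) (k : ι → ℕ) : Continuous (cosSum s k) :=
  continuous_finsetSum _ fun _ _ => by fun_prop

theorem abs_cosSum_le (s : Finset ι) (k : ι → ℕ) (θ : ℝ) : |cosSum s k θ| ≤ #s :=
  (abs_sum_le_sum_abs _ _).trans <| by
    simpa using sum_le_sum fun j _ => abs_cos_le_one (2 * π * k j * θ)

theorem integral_cosSum_sq (s : Finset ι) (k : ι → ℕ) (hk : Set.InjOn k s)
    (hk0 : ∀ j ∈ s, k j ≠ 0) :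
    ∫ θ in (0 : ℝ)..1, cosSum s k θ ^ 2 = #s / 2 := by
  classical
  simp_rw [cosSum, sq, sum_mul_sum]
  rw [intervalIntegral.integral_finsetSum fun i _ =>
    (continuous_finsetSum _ fun j _ => by fun_prop).intervalIntegrable _ _]
  have row (i) (hi : i ∈ s) :
      ∫ θ in (0 : ℝ)..1, ∑ j ∈ s, cos (2 * π * k i * θ) * cos (2 * π * k j * θ) = 1 / 2 := by
    rw [intervalIntegral.integral_finsetSum fun j _ =>
      (by fun_prop : Continuous _).intervalIntegrable _ _]
    simp_rw [integral_cos_mul_cos_two_pi _ _ (hk0 i hi)]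
    rw [sum_congr rfl fun j hj => if_congr (hk.eq_iff hi hj) rfl rfl, sum_ite_eq, if_pos hi]
  rw [sum_congr rfl row]
  simp [div_eq_mul_inv]

theorem integral_abs_cosSum_le (s : Finset ι) (k : ι → ℕ) (hk : Set.InjOn k s)
    (hk0 : ∀ j ∈ s, k j ≠ 0) : ∫ θ in (0 : ℝ)..1, |cosSum s k θ| ≤ √(#s) := by
  rcases s.eq_empty_or_nonempty with rfl | hs
  · simp [cosSum]
  have hpos : 0 < √(#s : ℝ) := by simpa using hs.card_pos
  refine (intervalIntegral_abs_le_add_integral_sq_div (continuous_cosSum s k) zero_le_one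
    hpos).trans ?_
  rw [integral_cosSum_sq s k hk hk0, div_right_comm, div_sqrt]
  linarith

end CosSum

theorem mul_exp_div_le (u a : ℝ) (hu : 0 ≤ u) (ha : 1 ≤ a) :
    u * exp (u / 4) / (4 * a ^ 2) ≤ (exp (u / a) - 1) + exp u / a ^ 4 := by
  set E := exp (u / 4)
  have hE : u ≤ 4 * E := by linarith [add_one_le_exp (u / 4)]
  have hEu : exp u = E ^ 4 := by rw [← exp_nat_mul]; ring_nf
  have hua : u / a ≤ exp (u / a) - 1 := by linarith [add_one_le_exp (u / a)]
  rcases le_or_gt E (4 * a) with h | h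
  · have : u * E / (4 * a ^ 2) ≤ u / a := by
      rw [div_le_div_iff₀ (by positivity) (by positivity)]
      nlinarith [mul_le_mul_of_nonneg_left h (by positivity : 0 ≤ u * a)]
    linarith [show 0 ≤ exp u / a ^ 4 by positivity]
  · have hEa : 1 ≤ E / a := by rw [le_div_iff₀ (by positivity)]; linarith
    calc u * E / (4 * a ^ 2) ≤ 4 * E * E / (4 * a ^ 2) := by gcongr
      _ = (E / a) ^ 2 := by field_simp
      _ ≤ (E / a) ^ 4 := pow_le_pow_right₀ hEa (by norm_num)
      _ = exp u / a ^ 4 := by rw [hEu, div_pow]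
      _ ≤ _ := by linarith [show 0 ≤ u / a by positivity]

theorem mul_exp_div_sqrt_le (u x : ℝ) (hu : 0 ≤ u) (hx : 1 ≤ x) :
    u * exp (u / 4) / (4 * √x) ≤ (exp (x ^ (-(1 / 4) : ℝ) * u) - 1) + exp u / x := by
  set a := x ^ (1 / 4 : ℝ)
  have ha : 1 ≤ a := one_le_rpow hx (by norm_num)
  have hx0 : 0 ≤ x := by linarith
  have ha2 : √x = a ^ 2 := by
    rw [sqrt_eq_rpow, ← rpow_natCast, ← rpow_mul hx0]; norm_num
  have ha4 : x = a ^ 4 := by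
    rw [← rpow_natCast, ← rpow_mul hx0]; norm_num
  have hainv : x ^ (-(1 / 4) : ℝ) * u = u / a := by
    rw [rpow_neg hx0, inv_mul_eq_div]
  rw [ha2, hainv]
  simpa only [← ha4] using mul_exp_div_le u a hu ha

theorem exp_cos_sum_deviation_bound (n : ℕ) (hn : 1 ≤ n) (s t : ℝ) :
    (∫ θ in (0:ℝ)..1,
        |Real.exp (((t ^ 2 - s ^ 2) / (4 * n)) *
          ∑ j ∈ Finset.Icc 1 n, Real.cos (4 * π * 8 ^ j * θ)) - 1|) ≤
      (Real.exp ((n : ℝ) ^ (-(1/4 : ℝ)) * (s ^ 2 + t ^ 2)) - 1)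
        + Real.exp (s ^ 2 + t ^ 2) / n := by
  set u := s ^ 2 + t ^ 2
  set c := (t ^ 2 - s ^ 2) / (4 * n)
  set S := cosSum (Icc 1 n) (fun j => 2 * 8 ^ j)
  have hn0 : (0 : ℝ) < n := by exact_mod_cast hn
  have hS (θ : ℝ) : ∑ j ∈ Icc 1 n, cos (4 * π * 8 ^ j * θ) = S θ := by
    simp only [S, cosSum]; push_cast; ring_nf
  have hc : |c| ≤ u / (4 * n) := by
    rw [abs_div, abs_of_pos (show (0 : ℝ) < 4 * n by linarith)]
    gcongr
    exact abs_sub_le_iff.mpr ⟨by linarith [sq_nonneg s], by linarith [sq_nonneg t]⟩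
  have hcS (θ : ℝ) : |c * S θ| ≤ u / 4 :=
    calc |c * S θ| = |c| * |S θ| := abs_mul _ _
      _ ≤ u / (4 * n) * n :=
        mul_le_mul hc (by simpa using abs_cosSum_le (Icc 1 n) (fun j => 2 * 8 ^ j) θ)
          (abs_nonneg _) (by positivity)
      _ = u / 4 := by field_simp
  have hint : ∫ θ in (0 : ℝ)..1, |S θ| ≤ √n := by
    simpa using integral_abs_cosSum_le (Icc 1 n) (fun j => 2 * 8 ^ j)
      ((mul_right_injective₀ two_ne_zero).comp (Nat.pow_right_injective le_add_self)).injOn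
      fun j _ => by positivity
  simp_rw [hS]
  calc ∫ θ in (0 : ℝ)..1, |exp (c * S θ) - 1|
      ≤ |c| * exp (u / 4) * ∫ θ in (0 : ℝ)..1, |S θ| :=
        intervalIntegral_abs_exp_mul_sub_one_le (continuous_cosSum _ _) zero_le_one c hcS
    _ ≤ u / (4 * n) * exp (u / 4) * √n := by
      gcongr
      exact intervalIntegral.integral_nonneg zero_le_one fun _ _ => abs_nonneg _
    _ = u * exp (u / 4) / (4 * √n) := by
      field_simp; rw [sq_sqrt hn0.le]
    _ ≤ _ := mul_exp_div_sqrt_le u n (by positivity) (by exact_mod_cast hn)
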